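/- arXiv:2109.10155 — 3 statements merged into one kernel-verified Lean document; each statement's English description precedes it below -/
import Mathlib

section
/- Let a : [0,1) → (0,∞) be continuous, C¹ on (0,1), with s ↦ a(s)·s strictly convex on [0,1), and fix θ ∈ (0,1) and q ≥ 2·(a'(1−θ)(1−θ) + a(1−θ))/a(1−θ). Define a_θ(s) = a(s) for 0 ≤ s ≤ 1−θ and a_θ(s) = (1−θ)^{−(q−2)/2} a(1−θ) s^{(q−2)/2} for s > 1−θ. Then the map φ(s) := a_θ(s)·s is strictly convex on [0,∞). -/
/-!
Write `b = 1 − θ`. On `[0, b]` the map `φ` is `s ↦ a(s)·s`, and on `[b, ∞)` it is `c·s^{q/2}` with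
`c = b^{-(q-2)/2}·a(b)`. Two strictly convex pieces glue to a strictly convex function as soon as
the left derivative at the junction is at most the right one; here these are `a'(b)·b + a(b)` and
`a(b)·q/2`, so the bound on `q` is exactly this condition. It also forces `q > 2`, which makes the
right piece strictly convex: strict convexity of `s ↦ a(s)·s`, which vanishes at `0`, gives
`a(b) < a'(b)·b + a(b)`.
-/

/-- The truncated coefficient `a_θ` of the paper. -/
noncomputable def aTrunc (a : ℝ → ℝ) (θ q : ℝ) : ℝ → ℝ := fun s =>
  if s ≤ 1 - θ then a s
  else (1 - θ) ^ (-(q - 2) / 2) * a (1 - θ) * s ^ ((q - 2) / 2)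

open Set

section Gluing

variable {𝕜 : Type*} [Field 𝕜] [LinearOrder 𝕜] [IsStrictOrderedRing 𝕜]

theorem StrictConvexOn.const_mul {E : Type*} [AddCommMonoid E] [SMul 𝕜 E] {s : Set E}
    {f : E → 𝕜} {c : 𝕜} (hc : 0 < c) (hf : StrictConvexOn 𝕜 s f) :
    StrictConvexOn 𝕜 s fun x => c * f x :=
  ⟨hf.1, fun x hx y hy hxy a b ha hb hab => by
    have h := mul_lt_mul_of_pos_left (hf.2 hx hy hxy ha hb hab) hc
    simp only [smul_eq_mul] at h ⊢
    linarith⟩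

theorem secant_mem_Ioo_of_adjacent_slope_lt {fx fy fz x y z : 𝕜} (hxy : x < y) (hyz : y < z)
    (h : (fy - fx) / (y - x) < (fz - fy) / (z - y)) :
    (fz - fx) / (z - x) ∈ Ioo ((fy - fx) / (y - x)) ((fz - fy) / (z - y)) := by
  have hyx : 0 < y - x := sub_pos.2 hxy
  have hzy : 0 < z - y := sub_pos.2 hyz
  have hzx : 0 < z - x := by linarith
  rw [div_lt_div_iff₀ hyx hzy] at h
  constructor
  · rw [div_lt_div_iff₀ hyx hzx]; nlinarith
  · rw [div_lt_div_iff₀ hzx hzy]; nlinarith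

theorem StrictConvexOn.of_Iic_Ici_of_slope_lt {s : Set 𝕜} {f : 𝕜 → 𝕜} {b : 𝕜} (hs : Convex 𝕜 s)
    (hl : StrictConvexOn 𝕜 (s ∩ Iic b) f) (hr : StrictConvexOn 𝕜 (s ∩ Ici b) f)
    (hb : ∀ u ∈ s, ∀ v ∈ s, u < b → b < v → (f b - f u) / (b - u) < (f v - f b) / (v - b)) :
    StrictConvexOn 𝕜 s f := by
  refine strictConvexOn_of_slope_strict_mono_adjacent hs fun {x y z} hx hz hxy hyz => ?_
  rcases le_or_gt z b with hzb | hbz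
  · exact hl.slope_strict_mono_adjacent ⟨hx, (hxy.trans hyz).le.trans hzb⟩ ⟨hz, hzb⟩ hxy hyz
  rcases le_or_gt b x with hbx | hxb
  · exact hr.slope_strict_mono_adjacent ⟨hx, hbx⟩ ⟨hz, hbx.trans (hxy.trans hyz).le⟩ hxy hyz
  have hbs : b ∈ s := hs.ordConnected.out hx hz ⟨hxb.le, hbz.le⟩
  have hys : y ∈ s := hs.ordConnected.out hx hz ⟨hxy.le, hyz.le⟩
  rcases lt_trichotomy y b with hyb | rfl | hby
  · calc (f y - f x) / (y - x) < (f b - f y) / (b - y) :=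
          hl.slope_strict_mono_adjacent ⟨hx, hxb.le⟩ ⟨hbs, le_rfl⟩ hxy hyb
      _ < (f z - f y) / (z - y) :=
          (secant_mem_Ioo_of_adjacent_slope_lt hyb hbz (hb y hys z hz hyb hbz)).1
  · exact hb x hx z hz hxy hyz
  · calc (f y - f x) / (y - x) < (f y - f b) / (y - b) :=
          (secant_mem_Ioo_of_adjacent_slope_lt hxb hby (hb x hx y hys hxb hby)).2
      _ < (f z - f y) / (z - y) :=
          hr.slope_strict_mono_adjacent ⟨hbs, le_rfl⟩ ⟨hz, hby.le.trans hyz.le⟩ hby hyz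

end Gluing

theorem StrictConvexOn.of_Iic_Ici_of_hasDerivWithinAt {s : Set ℝ} {f : ℝ → ℝ} {b l r : ℝ}
    (hs : Convex ℝ s) (hl : StrictConvexOn ℝ (s ∩ Iic b) f) (hr : StrictConvexOn ℝ (s ∩ Ici b) f)
    (hfl : HasDerivWithinAt f l (s ∩ Iic b) b) (hfr : HasDerivWithinAt f r (s ∩ Ici b) b)
    (hlr : l ≤ r) : StrictConvexOn ℝ s f := by
  refine StrictConvexOn.of_Iic_Ici_of_slope_lt hs hl hr fun u hu v hv hub hbv => ?_
  have hbs : b ∈ s := hs.ordConnected.out hu hv ⟨hub.le, hbv.le⟩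
  simp only [← slope_def_field]
  calc slope f u b < l := hl.slope_lt_of_hasDerivWithinAt ⟨hu, hub.le⟩ ⟨hbs, self_mem_Iic⟩ hub hfl
    _ ≤ r := hlr
    _ < slope f b v := hr.lt_slope_of_hasDerivWithinAt ⟨hbs, self_mem_Ici⟩ ⟨hv, hbv.le⟩ hbv hfr

section aTrunc

variable {a : ℝ → ℝ} {θ q : ℝ}

theorem aTrunc_mul_self_eqOn_Iic :
    EqOn (fun s => aTrunc a θ q s * s) (fun s => a s * s) (Iic (1 - θ)) := fun s hs => by
  simp only [aTrunc, if_pos (mem_Iic.1 hs)]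

theorem aTrunc_mul_self_eqOn_Ici (hθ : θ < 1) :
    EqOn (fun s => aTrunc a θ q s * s)
      (fun s => (1 - θ) ^ (-(q - 2) / 2) * a (1 - θ) * s ^ (q / 2)) (Ici (1 - θ)) := by
  intro s hs
  have hb : 0 < 1 - θ := by linarith
  rcases (mem_Ici.1 hs).eq_or_lt with rfl | hlt
  · have hpow : (1 - θ) ^ (-(q - 2) / 2) * (1 - θ) ^ (q / 2) = 1 - θ := by
      rw [← Real.rpow_add hb, show -(q - 2) / 2 + q / 2 = 1 by ring, Real.rpow_one]
    simp only [aTrunc, le_refl, if_true]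
    linear_combination (-a (1 - θ)) * hpow
  · have hs0 : 0 < s := hb.trans hlt
    simp only [aTrunc, if_neg (not_le.2 hlt)]
    rw [show q / 2 = (q - 2) / 2 + 1 by ring, Real.rpow_add_one hs0.ne']
    ring

theorem hasDerivAt_aTrunc_right_piece (hθ : θ < 1) :
    HasDerivAt (fun s => (1 - θ) ^ (-(q - 2) / 2) * a (1 - θ) * s ^ (q / 2))
      (a (1 - θ) * (q / 2)) (1 - θ) := by
  have hb : 0 < 1 - θ := by linarith
  have hpow : (1 - θ) ^ (-(q - 2) / 2) * (1 - θ) ^ (q / 2 - 1) = 1 := by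
    rw [← Real.rpow_add hb, show -(q - 2) / 2 + (q / 2 - 1) = 0 by ring, Real.rpow_zero]
  have h := (Real.hasDerivAt_rpow_const (p := q / 2) (Or.inl hb.ne')).const_mul
    ((1 - θ) ^ (-(q - 2) / 2) * a (1 - θ))
  rwa [show (1 - θ) ^ (-(q - 2) / 2) * a (1 - θ) * (q / 2 * (1 - θ) ^ (q / 2 - 1))
    = a (1 - θ) * (q / 2) by linear_combination a (1 - θ) * (q / 2) * hpow] at h

theorem strictConvexOn_aTrunc_mul_self_left (hθ : 0 < θ)
    (ha_conv : StrictConvexOn ℝ (Ico 0 1) (fun s => a s * s)) :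
    StrictConvexOn ℝ (Ici 0 ∩ Iic (1 - θ)) (fun s => aTrunc a θ q s * s) :=
  (ha_conv.subset (fun _ hs => ⟨hs.1, hs.2.trans_lt (by linarith)⟩)
    ((convex_Ici 0).inter (convex_Iic _))).congr
    (aTrunc_mul_self_eqOn_Iic.symm.mono inter_subset_right)

theorem strictConvexOn_aTrunc_mul_self_right (hθ : θ < 1) (ha : 0 < a (1 - θ)) (hq : 2 < q) :
    StrictConvexOn ℝ (Ici 0 ∩ Ici (1 - θ)) (fun s => aTrunc a θ q s * s) :=
  (((strictConvexOn_rpow (by linarith)).const_mul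
    (mul_pos (Real.rpow_pos_of_pos (by linarith) _) ha)).subset
    inter_subset_left ((convex_Ici 0).inter (convex_Ici _))).congr
    ((aTrunc_mul_self_eqOn_Ici hθ).symm.mono inter_subset_right)

end aTrunc

theorem strictConvexOn_aTrunc_mul_self_general (a : ℝ → ℝ) (θ q : ℝ)
    (ha_pos : ∀ s ∈ Set.Ico (0:ℝ) 1, 0 < a s)
    (ha_C1 : ContDiffOn ℝ 1 a (Set.Ioo 0 1))
    (ha_conv : StrictConvexOn ℝ (Set.Ico 0 1) (fun s => a s * s))
    (hθ : θ ∈ Set.Ioo (0:ℝ) 1)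
    (hq : 2 * (deriv a (1 - θ) * (1 - θ) + a (1 - θ)) / a (1 - θ) ≤ q) :
    StrictConvexOn ℝ (Set.Ici 0) (fun s => aTrunc a θ q s * s) := by
  obtain ⟨hθ0, hθ1⟩ := hθ
  have hb : 1 - θ ∈ Ioo (0 : ℝ) 1 := ⟨by linarith, by linarith⟩
  have hab : 0 < a (1 - θ) := ha_pos _ (Ioo_subset_Ico_self hb)
  have hF : HasDerivAt (fun s => a s * s) (deriv a (1 - θ) * (1 - θ) + a (1 - θ)) (1 - θ) := by
    simpa only [mul_one] using ((ha_C1.differentiableOn one_ne_zero).differentiableAt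
      (isOpen_Ioo.mem_nhds hb)).hasDerivAt.fun_mul (hasDerivAt_id' (1 - θ))
  have hjunction : deriv a (1 - θ) * (1 - θ) + a (1 - θ) ≤ a (1 - θ) * (q / 2) := by
    rw [div_le_iff₀ hab] at hq
    linarith
  have hsecant : a (1 - θ) < deriv a (1 - θ) * (1 - θ) + a (1 - θ) := by
    have h := ha_conv.slope_lt_of_hasDerivAt ⟨le_rfl, zero_lt_one⟩ (Ioo_subset_Ico_self hb) hb.1 hF
    rwa [slope_def_field, mul_zero, sub_zero, sub_zero, mul_div_cancel_right₀ _ hb.1.ne'] at h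
  have hq2 : 2 < q := by nlinarith
  exact StrictConvexOn.of_Iic_Ici_of_hasDerivWithinAt (convex_Ici 0)
    (strictConvexOn_aTrunc_mul_self_left hθ0 ha_conv)
    (strictConvexOn_aTrunc_mul_self_right hθ1 hab hq2)
    (hF.hasDerivWithinAt.congr_of_mem (fun s hs => aTrunc_mul_self_eqOn_Iic hs.2)
      ⟨hb.1.le, self_mem_Iic⟩)
    ((hasDerivAt_aTrunc_right_piece hθ1).hasDerivWithinAt.congr_of_mem
      (fun s hs => aTrunc_mul_self_eqOn_Ici hθ1 hs.2) ⟨hb.1.le, self_mem_Ici⟩) hjunction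

/-- Lemma 2.2 of the paper: the truncated map `φ(s) = a_θ(s)·s` is strictly
convex on `[0,∞)`, provided `q ≥ 2(a'(1−θ)(1−θ) + a(1−θ))/a(1−θ)`. -/
theorem strictConvexOn_aTrunc_mul_self (a : ℝ → ℝ) (θ q : ℝ)
    (ha_cont : ContinuousOn a (Set.Ico 0 1))
    (ha_pos : ∀ s ∈ Set.Ico (0:ℝ) 1, 0 < a s)
    (ha_C1 : ContDiffOn ℝ 1 a (Set.Ioo 0 1))
    (ha_conv : StrictConvexOn ℝ (Set.Ico 0 1) (fun s => a s * s))
    (hθ : θ ∈ Set.Ioo (0:ℝ) 1)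
    (hq : 2 * (deriv a (1 - θ) * (1 - θ) + a (1 - θ)) / a (1 - θ) ≤ q) :
    StrictConvexOn ℝ (Set.Ici 0) (fun s => aTrunc a θ q s * s) :=
  strictConvexOn_aTrunc_mul_self_general a θ q ha_pos ha_C1 ha_conv hθ hq
end

section
/- Let a : [0,1) → (0,∞) be continuous with min_{s∈[0,1]} a restricted appropriately, fix θ₁ ∈ (0,1), θ ∈ (0,θ₁], and q > 2, and define a_θ(s) = a(s) for 0 ≤ s ≤ 1−θ and a_θ(s) = (1−θ)^{−(q−2)/2} a(1−θ) s^{(q−2)/2} for s > 1−θ. Then there exist constants c̄ > 0 (depending only on a, θ₁, q, and not on θ) and c̄_θ > 0 such that c̄(s² + |s|^q) ≤ a_θ(s²)s² ≤ c̄_θ(s² + |s|^q) for all s ∈ ℝ. -/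
set_option maxHeartbeats 1000000 in
/-- Estimate (2.4) of the paper: two-sided power bounds for `a_θ(s²)s²`,
with lower constant `c̄ > 0` independent of `θ ∈ (0,θ₁]`. -/
theorem aTrunc_two_sided_bounds (a : ℝ → ℝ) (θ₁ q : ℝ)
    (ha_cont : ContinuousOn a (Set.Ico 0 1))
    (ha_pos : ∀ s ∈ Set.Ico (0:ℝ) 1, 0 < a s)
    (ha_C1 : ContDiffOn ℝ 1 a (Set.Ioo 0 1))
    (ha_conv : StrictConvexOn ℝ (Set.Ico 0 1) (fun s => a s * s))
    (ha_inf : Filter.Tendsto a (nhdsWithin 1 (Set.Iio 1)) Filter.atTop)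
    (hθ₁ : θ₁ ∈ Set.Ioo (0:ℝ) 1) (hq : 2 < q) :
    ∃ c > 0, ∀ θ ∈ Set.Ioc (0:ℝ) θ₁, ∃ cθ > 0, ∀ s : ℝ,
      c * (s ^ 2 + |s| ^ q) ≤ aTrunc a θ q (s ^ 2) * s ^ 2 ∧
      aTrunc a θ q (s ^ 2) * s ^ 2 ≤ cθ * (s ^ 2 + |s| ^ q) := by
  obtain ⟨hθ₁0, hθ₁1⟩ := hθ₁
  have hq2 : (0:ℝ) < (q - 2) / 2 := by linarith
  have hm_pos : 0 < a 0 := ha_pos 0 ⟨le_refl 0, one_pos⟩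
  set m : ℝ := a 0 with hm_def
  -- monotonicity of a on (0,1)
  have hmono : ∀ x y : ℝ, 0 < x → x ≤ y → y < 1 → a x ≤ a y := by
    intro x y hx hxy hy1
    rcases eq_or_lt_of_le hxy with rfl | hlt
    · exact le_refl _
    have hy : 0 < y := hx.trans hlt
    have hconv := ha_conv.convexOn.2
      (show (0:ℝ) ∈ Set.Ico (0:ℝ) 1 from ⟨le_refl 0, one_pos⟩)
      (show y ∈ Set.Ico (0:ℝ) 1 from ⟨hy.le, hy1⟩)
      (show (0:ℝ) ≤ 1 - x / y by
        have : x / y ≤ 1 := (div_le_one hy).mpr hxy; linarith)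
      (show (0:ℝ) ≤ x / y by positivity)
      (show (1 - x / y) + x / y = 1 by ring)
    simp only [smul_eq_mul, mul_zero, zero_add] at hconv
    have hxyy : x / y * y = x := div_mul_cancel₀ x hy.ne'
    rw [hxyy] at hconv
    -- hconv : a x * x ≤ (1 - x/y) * (a 0 * 0) + x/y * (a y * y)
    have h2 : a x * x ≤ a y * x := by
      have heq : x / y * (a y * y) = a y * x := by
        field_simp
      linarith [hconv, heq.le, heq.ge]
    exact le_of_mul_le_mul_right (by linarith [h2]) hx
  have hm_le : ∀ x : ℝ, 0 ≤ x → x < 1 → m ≤ a x := by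
    intro x hx0 hx1
    rcases eq_or_lt_of_le hx0 with rfl | hx
    · exact le_refl _
    -- a 0 ≤ a x by continuity at 0 and monotonicity
    have hten : Filter.Tendsto a (nhdsWithin 0 (Set.Ioo 0 1)) (nhds (a 0)) := by
      have := (ha_cont 0 ⟨le_refl 0, one_pos⟩).mono (Set.Ioo_subset_Ico_self)
      exact this
    have hNB : (nhdsWithin (0:ℝ) (Set.Ioo 0 1)).NeBot := by
      apply mem_closure_iff_nhdsWithin_neBot.mp
      rw [closure_Ioo one_ne_zero.symm]
      exact ⟨le_refl 0, zero_le_one⟩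
    have hev : ∀ᶠ t in nhdsWithin (0:ℝ) (Set.Ioo 0 1), a t ≤ a x := by
      have h1 : ∀ᶠ t in nhdsWithin (0:ℝ) (Set.Ioo 0 1), t ∈ Set.Ioo (0:ℝ) 1 :=
        eventually_mem_nhdsWithin
      have h2 : ∀ᶠ t in nhdsWithin (0:ℝ) (Set.Ioo 0 1), t < x :=
        Filter.Eventually.filter_mono nhdsWithin_le_nhds
          (Filter.Tendsto.eventually_lt_const hx Filter.tendsto_id)
      filter_upwards [h1, h2] with t ht htx
      exact hmono t x ht.1 htx.le hx1
    exact le_of_tendsto hten hev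
  set K : ℝ := (1 - θ₁) ^ (-((q - 2) / 2)) with hK_def
  have h1θ₁ : (0:ℝ) < 1 - θ₁ := by linarith
  have hP_pos : 0 < (1 - θ₁) ^ ((q - 2) / 2) := Real.rpow_pos_of_pos h1θ₁ _
  have hKP : K * (1 - θ₁) ^ ((q - 2) / 2) = 1 := by
    rw [hK_def, Real.rpow_neg h1θ₁.le]
    exact inv_mul_cancel₀ hP_pos.ne'
  have hK1 : 1 ≤ K := by
    rw [hK_def]
    exact Real.one_le_rpow_of_pos_of_le_one_of_nonpos h1θ₁ (by linarith) (by linarith)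
  have hKpos : 0 < K := by linarith
  refine ⟨m / (1 + K), by positivity, ?_⟩
  rintro θ ⟨hθ0, hθθ₁⟩
  have h1θ : (0:ℝ) < 1 - θ := by linarith
  have h1θ1 : 1 - θ < 1 := by linarith
  have hθsub : Set.Icc (0:ℝ) (1 - θ) ⊆ Set.Ico 0 1 := fun t ht =>
    ⟨ht.1, lt_of_le_of_lt ht.2 h1θ1⟩
  obtain ⟨t0, ht0mem, ht0max'⟩ := isCompact_Icc.exists_isMaxOn
    (Set.nonempty_Icc.mpr h1θ.le) (ha_cont.mono hθsub)
  have ht0max : ∀ t ∈ Set.Icc (0:ℝ) (1 - θ), a t ≤ a t0 := fun t ht => ht0max' ht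
  set B : ℝ := (1 - θ) ^ (-(q - 2) / 2) * a (1 - θ) with hB_def
  have ha1θ : 0 < a (1 - θ) := ha_pos _ ⟨h1θ.le, h1θ1⟩
  have hBpos : 0 < B := mul_pos (Real.rpow_pos_of_pos h1θ _) ha1θ
  have hmB : m ≤ B := by
    have h1 : (1:ℝ) ≤ (1 - θ) ^ (-(q - 2) / 2) := by
      rw [neg_div]
      exact Real.one_le_rpow_of_pos_of_le_one_of_nonpos h1θ (by linarith) (by linarith)
    have h2 : m ≤ a (1 - θ) := hm_le _ h1θ.le h1θ1
    nlinarith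
  refine ⟨max (a t0) B, lt_max_of_lt_right hBpos, ?_⟩
  intro s
  have hc2 : m / (1 + K) ≤ m / 2 :=
    div_le_div_of_nonneg_left hm_pos.le two_pos (by linarith)
  by_cases hs0 : s = 0
  · subst hs0
    simp only [ne_eq, OfNat.ofNat_ne_zero, not_false_eq_true, zero_pow, abs_zero]
    rw [Real.zero_rpow (by linarith : q ≠ 0)]
    simp [aTrunc, h1θ.le]
  have habs : 0 < |s| := abs_pos.mpr hs0
  have hs2 : 0 < s ^ 2 := by positivity
  have hrq : 0 ≤ |s| ^ q := Real.rpow_nonneg (abs_nonneg s) q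
  have h1 : (s ^ 2 : ℝ) = |s| ^ (2:ℝ) := by
    rw [show ((2:ℝ)) = ((2:ℕ):ℝ) by norm_num, Real.rpow_natCast, sq_abs]
  have h2 : (s ^ 2 : ℝ) ^ ((q - 2) / 2) = |s| ^ (q - 2) := by
    rw [h1, ← Real.rpow_mul (abs_nonneg s)]
    congr 1; ring
  have h3 : |s| ^ q = (s ^ 2) ^ ((q - 2) / 2) * s ^ 2 := by
    rw [h2, h1, ← Real.rpow_add habs]
    congr 1; ring
  by_cases hcase : s ^ 2 ≤ 1 - θ
  · -- small s: a_θ(s²) = a(s²)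
    have hval : aTrunc a θ q (s ^ 2) * s ^ 2 = a (s ^ 2) * s ^ 2 := by
      simp [aTrunc, hcase]
    have hs2lt1 : s ^ 2 < 1 := lt_of_le_of_lt hcase h1θ1
    have hma : m ≤ a (s ^ 2) := hm_le _ (sq_nonneg s) hs2lt1
    have habs1 : |s| ≤ 1 := by
      rw [abs_le]
      constructor <;> nlinarith [sq_nonneg (s + 1), sq_nonneg (s - 1)]
    have hq_le : |s| ^ q ≤ s ^ 2 := by
      rw [h1]
      exact Real.rpow_le_rpow_of_exponent_ge habs habs1 (by linarith)
    constructor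
    · rw [hval]
      have step1 : m / (1 + K) * (s ^ 2 + |s| ^ q) ≤ m / 2 * (2 * s ^ 2) := by
        nlinarith [hs2.le]
      have step2 : m / 2 * (2 * s ^ 2) = m * s ^ 2 := by ring
      have step3 : m * s ^ 2 ≤ a (s ^ 2) * s ^ 2 :=
        mul_le_mul_of_nonneg_right hma hs2.le
      linarith
    · rw [hval]
      have hmem : s ^ 2 ∈ Set.Icc (0:ℝ) (1 - θ) := ⟨sq_nonneg s, hcase⟩
      have hub : a (s ^ 2) ≤ max (a t0) B := le_trans (ht0max _ hmem) (le_max_left _ _)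
      have hMpos : 0 < max (a t0) B := lt_max_of_lt_right hBpos
      have h5 : a (s ^ 2) * s ^ 2 ≤ max (a t0) B * s ^ 2 :=
        mul_le_mul_of_nonneg_right hub hs2.le
      have h6 : max (a t0) B * s ^ 2 ≤ max (a t0) B * (s ^ 2 + |s| ^ q) :=
        mul_le_mul_of_nonneg_left (by linarith) hMpos.le
      linarith
  · -- large s: a_θ(s²)s² = B |s|^q
    rw [not_le] at hcase
    have hval : aTrunc a θ q (s ^ 2) * s ^ 2 = B * |s| ^ q := by
      simp only [aTrunc, not_le.mpr hcase, if_false]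
      rw [h3, hB_def]; ring
    have hs2ge : 1 - θ₁ ≤ s ^ 2 := by linarith
    have h4 : (1 - θ₁) ^ ((q - 2) / 2) * s ^ 2 ≤ |s| ^ q := by
      rw [h3]
      exact mul_le_mul_of_nonneg_right
        (Real.rpow_le_rpow h1θ₁.le hs2ge hq2.le) hs2.le
    have hs2K : s ^ 2 ≤ K * |s| ^ q := by
      nlinarith [hKP, h4, hKpos]
    constructor
    · rw [hval]
      have step1 : m / (1 + K) * (s ^ 2 + |s| ^ q) ≤ m / (1 + K) * ((1 + K) * |s| ^ q) := by
        apply mul_le_mul_of_nonneg_left _ (by positivity)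
        nlinarith
      have step2 : m / (1 + K) * ((1 + K) * |s| ^ q) = m * |s| ^ q := by
        field_simp
      have step3 : m * |s| ^ q ≤ B * |s| ^ q := mul_le_mul_of_nonneg_right hmB hrq
      linarith
    · rw [hval]
      have hub : B ≤ max (a t0) B := le_max_right _ _
      have hMpos : 0 < max (a t0) B := lt_max_of_lt_right hBpos
      have h5 : B * |s| ^ q ≤ max (a t0) B * |s| ^ q :=
        mul_le_mul_of_nonneg_right hub hrq
      have h6 : max (a t0) B * |s| ^ q ≤ max (a t0) B * (s ^ 2 + |s| ^ q) :=
        mul_le_mul_of_nonneg_left (by nlinarith [sq_nonneg s]) hMpos.le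
      linarith
end

section
/- With a_θ as in the truncation construction and A_θ(s) = ∫₀ˢ a_θ(t) dt, there exist constants c̄ > 0 (independent of θ ∈ (0,θ₁]) and c̄_θ > 0 such that c̄(s² + |s|^q) ≤ A_θ(s²) ≤ c̄_θ(s² + |s|^q) for all s ∈ ℝ. -/
/-- Its primitive `A_θ(s) = ∫₀ˢ a_θ(t) dt`. -/
noncomputable def ATrunc (a : ℝ → ℝ) (θ q : ℝ) : ℝ → ℝ := fun s =>
  ∫ t in (0:ℝ)..s, aTrunc a θ q t

/-- Estimate (2.5) of the paper: two-sided power bounds for `A_θ(s²)`,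
with lower constant `c̄ > 0` independent of `θ ∈ (0,θ₁]`. -/
theorem ATrunc_two_sided_bounds (a : ℝ → ℝ) (θ₁ q : ℝ)
    (ha_cont : ContinuousOn a (Set.Ico 0 1))
    (ha_pos : ∀ s ∈ Set.Ico (0:ℝ) 1, 0 < a s)
    (ha_C1 : ContDiffOn ℝ 1 a (Set.Ioo 0 1))
    (ha_conv : StrictConvexOn ℝ (Set.Ico 0 1) (fun s => a s * s))
    (ha_inf : Filter.Tendsto a (nhdsWithin 1 (Set.Iio 1)) Filter.atTop)
    (hθ₁ : θ₁ ∈ Set.Ioo (0:ℝ) 1) (hq : 2 < q) :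
    ∃ c > 0, ∀ θ ∈ Set.Ioc (0:ℝ) θ₁, ∃ cθ > 0, ∀ s : ℝ,
      c * (s ^ 2 + |s| ^ q) ≤ ATrunc a θ q (s ^ 2) ∧
      ATrunc a θ q (s ^ 2) ≤ cθ * (s ^ 2 + |s| ^ q) := by
  obtain ⟨hθ₁0, hθ₁1⟩ := hθ₁
  have hq0 : (0:ℝ) < q := by linarith
  -- a uniform positive lower bound for `a` on [0,1)
  have h1 : ∀ᶠ s in nhdsWithin 1 (Set.Iio 1), 1 ≤ a s :=
    ha_inf.eventually (Filter.eventually_ge_atTop 1)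
  rw [eventually_nhdsWithin_iff] at h1
  obtain ⟨ε, hε, hball⟩ := Metric.eventually_nhds_iff.mp h1
  set β₀ : ℝ := max (1 - ε/2) 0 with hβ₀def
  have hβ₀0 : (0:ℝ) ≤ β₀ := le_max_right _ _
  have hβ₀1 : β₀ < 1 := by
    apply max_lt <;> linarith
  obtain ⟨x₀, hx₀, hmin⟩ :=
    isCompact_Icc.exists_isMinOn ⟨0, Set.mem_Icc.mpr ⟨le_refl 0, hβ₀0⟩⟩
      (ha_cont.mono (fun t ht => ⟨ht.1, lt_of_le_of_lt ht.2 hβ₀1⟩))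
  set m : ℝ := min (a x₀) 1 with hmdef
  have hm0 : 0 < m :=
    lt_min (ha_pos x₀ ⟨hx₀.1, lt_of_le_of_lt hx₀.2 hβ₀1⟩) one_pos
  have hm : ∀ t ∈ Set.Ico (0:ℝ) 1, m ≤ a t := by
    intro t ht
    rcases le_or_gt t β₀ with h | h
    · exact le_trans (min_le_left _ _) (hmin ⟨ht.1, h⟩)
    · refine le_trans (min_le_right _ _) (hball ?_ ht.2)
      have hb : 1 - ε/2 ≤ β₀ := le_max_left _ _
      rw [Real.dist_eq, abs_lt]
      constructor
      · linarith [ht.2]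
      · linarith [ht.2]
  set r : ℝ := (q-2)/2 with hrdef
  have hr0 : 0 < r := by rw [hrdef]; linarith
  set κ : ℝ := (1-θ₁) ^ r with hκdef
  have hκ0 : 0 < κ := Real.rpow_pos_of_pos (by linarith) r
  set c : ℝ := min (m/2) (m * (2/q) * κ / (κ+1)) with hcdef
  have hc0 : 0 < c := lt_min (by positivity) (by positivity)
  clear_value β₀ m r κ c
  refine ⟨c, hc0, ?_⟩
  rintro θ ⟨hθ0, hθθ₁⟩
  set β : ℝ := 1 - θ with hβdef
  have hβ0 : 0 < β := by rw [hβdef]; linarith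
  have hβ1 : β < 1 := by rw [hβdef]; linarith
  have hβθ₁ : 1 - θ₁ ≤ β := by rw [hβdef]; linarith
  obtain ⟨x₁, hx₁, hmax⟩ :=
    isCompact_Icc.exists_isMaxOn ⟨0, Set.mem_Icc.mpr ⟨le_refl 0, hβ0.le⟩⟩
      (ha_cont.mono (fun t ht => ⟨ht.1, lt_of_le_of_lt ht.2 hβ1⟩))
  set M : ℝ := a x₁ with hMdef
  have hM0 : 0 < M := ha_pos x₁ ⟨hx₁.1, lt_of_le_of_lt hx₁.2 hβ1⟩
  have haβ : 0 < a β := ha_pos β ⟨hβ0.le, hβ1⟩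
  set C : ℝ := β ^ (-r) * a β with hCdef
  have hC0 : 0 < C := mul_pos (Real.rpow_pos_of_pos hβ0 _) haβ
  have hmC : m ≤ C := by
    have h1 : 1 ≤ β ^ (-r) :=
      Real.one_le_rpow_of_pos_of_le_one_of_nonpos hβ0 hβ1.le (by linarith)
    calc m = 1 * m := (one_mul m).symm
      _ ≤ β ^ (-r) * a β :=
          mul_le_mul h1 (hm β ⟨hβ0.le, hβ1⟩) hm0.le (by positivity)
  set cθ : ℝ := M + C * (2/q) with hcθdef
  have hcθ0 : 0 < cθ := by positivity
  clear_value β M C cθ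
  refine ⟨cθ, hcθ0, ?_⟩
  intro s
  set u : ℝ := s ^ 2 with hudef
  have hu0 : 0 ≤ u := by rw [hudef]; positivity
  have hU : u ^ (q/2 : ℝ) = |s| ^ q := by
    have h1 : u = |s| ^ ((2:ℕ) : ℝ) := by
      rw [Real.rpow_natCast, hudef]; exact (sq_abs s).symm
    rw [h1, ← Real.rpow_mul (abs_nonneg s)]
    congr 1
    push_cast
    ring
  clear_value u
  rw [← hU]
  -- bounds on the integral up to a point `v ≤ β`
  have key : ∀ v : ℝ, 0 ≤ v → v ≤ β →
      IntervalIntegrable (aTrunc a θ q) MeasureTheory.volume 0 v ∧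
      m * v ≤ ATrunc a θ q v ∧ ATrunc a θ q v ≤ M * v := by
    intro v hv0 hvβ
    have hsub : Set.Icc (0:ℝ) v ⊆ Set.Ico 0 1 :=
      fun t ht => ⟨ht.1, lt_of_le_of_lt (ht.2.trans hvβ) hβ1⟩
    have hEq : Set.EqOn (aTrunc a θ q) a (Set.Icc 0 v) := by
      intro t ht
      have htβ : t ≤ 1 - θ := by rw [← hβdef]; exact ht.2.trans hvβ
      simp only [aTrunc]
      rw [if_pos htβ]
    have hcont : ContinuousOn (aTrunc a θ q) (Set.Icc 0 v) :=
      (ha_cont.mono hsub).congr hEq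
    have hint : IntervalIntegrable (aTrunc a θ q) MeasureTheory.volume 0 v :=
      hcont.intervalIntegrable_of_Icc hv0
    refine ⟨hint, ?_, ?_⟩
    · have hmono := intervalIntegral.integral_mono_on hv0 intervalIntegrable_const hint
        (fun t ht => by rw [hEq ht]; exact hm t (hsub ht))
      simp only [intervalIntegral.integral_const, smul_eq_mul, sub_zero] at hmono
      simpa only [ATrunc, mul_comm] using hmono
    · have hmono := intervalIntegral.integral_mono_on hv0 hint intervalIntegrable_const
        (fun t ht => by rw [hEq ht]; exact (hmax ⟨ht.1, ht.2.trans hvβ⟩).trans hMdef.ge)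
      simp only [intervalIntegral.integral_const, smul_eq_mul, sub_zero] at hmono
      simpa only [ATrunc, mul_comm] using hmono
  rcases le_or_gt u β with hcase | hcase
  · -- small case : u ≤ β
    obtain ⟨_, hlow, hup⟩ := key u hu0 hcase
    have hUnn : 0 ≤ u ^ (q/2 : ℝ) := Real.rpow_nonneg hu0 _
    have hUu : u ^ (q/2 : ℝ) ≤ u := by
      rcases eq_or_lt_of_le hu0 with h0 | h0
      · rw [← h0, Real.zero_rpow (by positivity : (q/2:ℝ) ≠ 0)]
      · have h2 := Real.rpow_le_rpow_of_exponent_ge h0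
          (le_trans hcase hβ1.le) (by linarith : (1:ℝ) ≤ q/2)
        simpa [Real.rpow_one] using h2
    constructor
    · have hcm : c ≤ m/2 := by rw [hcdef]; exact min_le_left _ _
      linarith [hlow, mul_le_mul_of_nonneg_left hUu hc0.le,
        mul_le_mul_of_nonneg_right hcm hu0]
    · have hMcθ : M ≤ cθ := by
        have : 0 < C * (2/q) := by positivity
        rw [hcθdef]; linarith
      linarith [hup, mul_le_mul_of_nonneg_right hMcθ hu0, mul_nonneg hcθ0.le hUnn]
  · -- large case : β < u
    have hu0' : 0 < u := lt_trans hβ0 hcase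
    obtain ⟨hint1, hlow1, hup1⟩ := key β hβ0.le le_rfl
    have hEq2 : Set.EqOn (aTrunc a θ q) (fun t => C * t ^ r) (Set.Icc β u) := by
      intro t ht
      by_cases htβ : t ≤ 1 - θ
      · have hteq : t = β := le_antisymm (by rw [hβdef]; exact htβ) ht.1
        have hcancel : β ^ (-r) * β ^ r = 1 := by
          rw [← Real.rpow_add hβ0]; simp
        simp only [aTrunc]
        rw [if_pos htβ, hteq]
        calc a β = (β ^ (-r) * β ^ r) * a β := by rw [hcancel, one_mul]
          _ = C * β ^ r := by rw [hCdef]; ring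
      · have hexp : (-(q - 2) / 2 : ℝ) = -r := by rw [hrdef]; ring
        simp only [aTrunc, if_neg htβ]
        rw [hexp, ← hrdef, ← hβdef, hCdef]
    have hg : ContinuousOn (fun t : ℝ => t ^ r) (Set.Icc β u) := by
      intro t ht
      exact (Real.continuousAt_rpow_const t r
        (Or.inl (ne_of_gt (lt_of_lt_of_le hβ0 ht.1)))).continuousWithinAt
    have hcont2 : ContinuousOn (fun t : ℝ => C * t ^ r) (Set.Icc β u) :=
      continuousOn_const.mul hg
    have hint2 : IntervalIntegrable (aTrunc a θ q) MeasureTheory.volume β u :=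
      (hcont2.congr hEq2).intervalIntegrable_of_Icc hcase.le
    have hsplit : ATrunc a θ q u =
        ATrunc a θ q β + ∫ t in β..u, aTrunc a θ q t := by
      simp only [ATrunc]
      exact (intervalIntegral.integral_add_adjacent_intervals hint1 hint2).symm
    have hEq2' : Set.EqOn (aTrunc a θ q) (fun t => C * t ^ r) (Set.uIcc β u) := by
      rw [Set.uIcc_of_le hcase.le]; exact hEq2
    have hI2 : (∫ t in β..u, aTrunc a θ q t) =
        C * (u ^ (q/2 : ℝ) - β ^ (q/2 : ℝ)) * (2/q) := by
      rw [intervalIntegral.integral_congr hEq2',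
        intervalIntegral.integral_const_mul,
        integral_rpow (Or.inl (by linarith : (-1:ℝ) < r))]
      have hr1 : r + 1 = q/2 := by rw [hrdef]; ring
      rw [hr1]
      field_simp
    have hUnn : 0 ≤ u ^ (q/2 : ℝ) := Real.rpow_nonneg hu0 _
    have hβq : β ^ (q/2 : ℝ) ≤ β := by
      have h2 := Real.rpow_le_rpow_of_exponent_ge hβ0 hβ1.le
        (by linarith : (1:ℝ) ≤ q/2)
      simpa [Real.rpow_one] using h2
    have hβqU : β ^ (q/2 : ℝ) ≤ u ^ (q/2 : ℝ) :=
      Real.rpow_le_rpow hβ0.le hcase.le (by positivity)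
    have hβq0 : 0 ≤ β ^ (q/2 : ℝ) := (Real.rpow_pos_of_pos hβ0 _).le
    have hκu : κ * u ≤ u ^ (q/2 : ℝ) := by
      have h1 : u ^ (q/2 : ℝ) = u * u ^ r := by
        rw [show (q/2 : ℝ) = 1 + r by rw [hrdef]; ring,
          Real.rpow_add hu0', Real.rpow_one]
      have h2 : κ ≤ u ^ r := by
        rw [hκdef]
        exact Real.rpow_le_rpow (by linarith) (le_trans hβθ₁ hcase.le) hr0.le
      calc κ * u = u * κ := mul_comm _ _
        _ ≤ u * u ^ r := mul_le_mul_of_nonneg_left h2 hu0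
        _ = u ^ (q/2 : ℝ) := h1.symm
    have hκ1 : (0:ℝ) < κ + 1 := by linarith
    have hcκ : c * (κ + 1) ≤ m * (2/q) * κ := by
      have h1 : c ≤ m * (2/q) * κ / (κ+1) := by rw [hcdef]; exact min_le_right _ _
      calc c * (κ+1) ≤ (m * (2/q) * κ / (κ+1)) * (κ+1) :=
            mul_le_mul_of_nonneg_right h1 hκ1.le
        _ = m * (2/q) * κ := div_mul_cancel₀ _ hκ1.ne'
    have he0 : (0:ℝ) < 2/q := by positivity
    have he1 : (2:ℝ)/q ≤ 1 := by rw [div_le_one hq0]; linarith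
    rw [hsplit, hI2]
    have hA : c * (u + u ^ (q/2 : ℝ)) ≤ m * (2/q) * u ^ (q/2 : ℝ) := by
      have h1 : c * (κ * u) ≤ c * u ^ (q/2 : ℝ) :=
        mul_le_mul_of_nonneg_left hκu hc0.le
      have h2 : c * (κ+1) * u ^ (q/2 : ℝ) ≤ m * (2/q) * κ * u ^ (q/2 : ℝ) :=
        mul_le_mul_of_nonneg_right hcκ hUnn
      have h3 : κ * (c * (u + u ^ (q/2 : ℝ))) ≤ κ * (m * (2/q) * u ^ (q/2 : ℝ)) := by
        linarith [h1, h2]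
      exact le_of_mul_le_mul_left h3 hκ0
    constructor
    · have h3 : m * ((u ^ (q/2 : ℝ) - β ^ (q/2 : ℝ)) * (2/q)) ≤
          C * ((u ^ (q/2 : ℝ) - β ^ (q/2 : ℝ)) * (2/q)) :=
        mul_le_mul_of_nonneg_right hmC
          (mul_nonneg (by linarith) he0.le)
      have h4 : m * (2/q) * β ^ (q/2 : ℝ) ≤ m * β ^ (q/2 : ℝ) :=
        mul_le_mul_of_nonneg_right (mul_le_of_le_one_right hm0.le he1) hβq0
      have h5 : m * β ^ (q/2 : ℝ) ≤ m * β :=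
        mul_le_mul_of_nonneg_left hβq hm0.le
      linarith [hlow1, hA, h3, h4, h5]
    · rw [hcθdef]
      linarith [hup1, mul_le_mul_of_nonneg_left hcase.le hM0.le,
        mul_nonneg hM0.le hUnn,
        mul_nonneg (mul_nonneg hC0.le he0.le) hu0,
        mul_nonneg (mul_nonneg hC0.le he0.le) hβq0]
end
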